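/- arXiv:0704.2858 — 12 statements merged into one kernel-verified Lean document; each statement's English description precedes it below -/
import Mathlib

section
/- Let U ⊆ ℂ be open and let v, u : U → ℂ be differentiable functions with v(t) ≠ 0 for all t ∈ U, satisfying system (6) on U. Define x(t) := 1/v(t)² and y(t) := −2/v(t)³ − (t/2)v(t) − (1/2)v(t)² + u(t)v(t)³. Then x and y are differentiable on U and satisfy the Painlevé I Hamiltonian system dx/dt = y, dy/dt = 6x² + t on U. -/
/-!
Everything is pointwise: by the chain rule, `x = v⁻²` and `y` have derivatives that are rational
expressions in `t, v, v', u, u'`. Substituting the right-hand sides of system (6) for `v'` and `u'`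
and clearing the powers of `v` turns both Painlevé I equations into polynomial identities.
-/

noncomputable section

namespace PainleveI

def systemSixV (t v u : ℂ) : ℂ :=
  1 + (t / 4) * v ^ 4 + (1 / 4) * v ^ 5 - (1 / 2) * v ^ 6 * u

def systemSixU (t v u : ℂ) : ℂ :=
  (1 / 8) * t ^ 2 * v + (3 / 8) * t * v ^ 2 - (t * u - 1 / 4) * v ^ 3
    - (5 / 4) * v ^ 4 * u + (3 / 2) * v ^ 5 * u ^ 2

def toX (v : ℂ) : ℂ := 1 / v ^ 2

def toY (t v u : ℂ) : ℂ := -2 / v ^ 3 - (t / 2) * v - (1 / 2) * v ^ 2 + u * v ^ 3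

section Derivatives

variable {𝕜 : Type*} [NontriviallyNormedField 𝕜] {v u : 𝕜 → 𝕜} {v' u' t : 𝕜}

theorem hasDerivAt_one_div_sq (hv : HasDerivAt v v' t) (hv0 : v t ≠ 0) :
    HasDerivAt (fun s => 1 / v s ^ 2) (-2 * v' / v t ^ 3) t := by
  simp only [one_div]
  refine ((hv.fun_pow 2).fun_inv (pow_ne_zero 2 hv0)).congr_deriv ?_
  field_simp
  push_cast
  ring

theorem hasDerivAt_painleveY [CharZero 𝕜] (hv : HasDerivAt v v' t) (hu : HasDerivAt u u' t)
    (hv0 : v t ≠ 0) :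
    HasDerivAt (fun s => -2 / v s ^ 3 - (s / 2) * v s - (1 / 2) * v s ^ 2 + u s * v s ^ 3)
      (6 * v' / v t ^ 4 - (v t + t * v') / 2 - v t * v' + u' * v t ^ 3 + 3 * u t * v t ^ 2 * v')
      t := by
  have hA : HasDerivAt (fun s => -2 / v s ^ 3) (6 * v' / v t ^ 4) t := by
    simp only [div_eq_mul_inv (-2 : 𝕜)]
    refine (((hv.fun_pow 3).fun_inv (pow_ne_zero 3 hv0)).const_mul (-2 : 𝕜)).congr_deriv ?_
    field_simp
    push_cast
    ring
  have hB : HasDerivAt (fun s => (s / 2) * v s) ((v t + t * v') / 2) t :=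
    (((hasDerivAt_id t).div_const 2).fun_mul hv).congr_deriv (by simp only [id]; ring)
  have hC : HasDerivAt (fun s => (1 / 2) * v s ^ 2) (v t * v') t :=
    ((hv.fun_pow 2).const_mul (1 / 2 : 𝕜)).congr_deriv (by push_cast; field_simp)
  have hD : HasDerivAt (fun s => u s * v s ^ 3) (u' * v t ^ 3 + 3 * u t * v t ^ 2 * v') t :=
    (hu.fun_mul (hv.fun_pow 3)).congr_deriv (by push_cast; ring)
  exact (((hA.fun_sub hB).fun_sub hC).fun_add hD).congr_deriv (by ring)

end Derivatives

theorem neg_two_mul_systemSixV_div_cube {v : ℂ} (t u : ℂ) (hv : v ≠ 0) :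
    -2 * systemSixV t v u / v ^ 3 = toY t v u := by
  unfold systemSixV toY
  field_simp
  ring

theorem painleveI_identity {v : ℂ} (t u : ℂ) (hv : v ≠ 0) :
    let v' := systemSixV t v u
    6 * v' / v ^ 4 - (v + t * v') / 2 - v * v' + systemSixU t v u * v ^ 3 + 3 * u * v ^ 2 * v' =
      6 * toX v ^ 2 + t := by
  unfold systemSixV systemSixU toX
  field_simp
  ring

theorem hasDerivAt_painleveI_of_systemSix {v u : ℂ → ℂ} {t : ℂ}
    (hv : HasDerivAt v (systemSixV t (v t) (u t)) t)
    (hu : HasDerivAt u (systemSixU t (v t) (u t)) t) (hv0 : v t ≠ 0) :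
    HasDerivAt (fun s => toX (v s)) (toY t (v t) (u t)) t ∧
      HasDerivAt (fun s => toY s (v s) (u s)) (6 * toX (v t) ^ 2 + t) t :=
  ⟨(hasDerivAt_one_div_sq hv hv0).congr_deriv (neg_two_mul_systemSixV_div_cube t (u t) hv0),
    (hasDerivAt_painleveY hv hu hv0).congr_deriv (painleveI_identity t (u t) hv0)⟩

end PainleveI

end

open PainleveI in
theorem double_covering_to_painleveI_general
    (U : Set ℂ) (v u : ℂ → ℂ)
    (hv : ∀ t ∈ U, DifferentiableAt ℂ v t) (hu : ∀ t ∈ U, DifferentiableAt ℂ u t)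
    (hvne : ∀ t ∈ U, v t ≠ 0)
    (hsys1 : ∀ t ∈ U, deriv v t =
      1 + (t / 4) * (v t) ^ 4 + (1 / 4) * (v t) ^ 5 - (1 / 2) * (v t) ^ 6 * u t)
    (hsys2 : ∀ t ∈ U, deriv u t =
      (1 / 8) * t ^ 2 * v t + (3 / 8) * t * (v t) ^ 2 - (t * u t - 1 / 4) * (v t) ^ 3
        - (5 / 4) * (v t) ^ 4 * u t + (3 / 2) * (v t) ^ 5 * (u t) ^ 2)
    (x y : ℂ → ℂ)
    (hx : ∀ t, x t = 1 / (v t) ^ 2)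
    (hy : ∀ t, y t = -2 / (v t) ^ 3 - (t / 2) * v t - (1 / 2) * (v t) ^ 2 + u t * (v t) ^ 3) :
    (∀ t ∈ U, DifferentiableAt ℂ x t) ∧ (∀ t ∈ U, DifferentiableAt ℂ y t) ∧
    (∀ t ∈ U, deriv x t = y t) ∧ (∀ t ∈ U, deriv y t = 6 * (x t) ^ 2 + t) := by
  have hxv : x = fun s => toX (v s) := funext hx
  have hyv : y = fun s => toY s (v s) (u s) := funext hy
  have hasDerivAt_xy : ∀ t ∈ U, HasDerivAt x (y t) t ∧ HasDerivAt y (6 * x t ^ 2 + t) t := by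
    intro t ht
    rw [hxv, hyv]
    exact hasDerivAt_painleveI_of_systemSix ((hv t ht).hasDerivAt.congr_deriv (hsys1 t ht))
      ((hu t ht).hasDerivAt.congr_deriv (hsys2 t ht)) (hvne t ht)
  exact ⟨fun t ht => (hasDerivAt_xy t ht).1.differentiableAt, fun t ht => (hasDerivAt_xy t ht).2.differentiableAt,
    fun t ht => (hasDerivAt_xy t ht).1.deriv, fun t ht => (hasDerivAt_xy t ht).2.deriv⟩

/-- The algebraic transformation x = 1/v², y = −2/v³ − (t/2)v − v²/2 + uv³ takes
solutions of system (6) to solutions of the Painlevé I Hamiltonian system (3). -/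
theorem double_covering_to_painleveI
    (U : Set ℂ) (hU : IsOpen U) (v u : ℂ → ℂ)
    (hv : ∀ t ∈ U, DifferentiableAt ℂ v t) (hu : ∀ t ∈ U, DifferentiableAt ℂ u t)
    (hvne : ∀ t ∈ U, v t ≠ 0)
    (hsys1 : ∀ t ∈ U, deriv v t =
      1 + (t / 4) * (v t) ^ 4 + (1 / 4) * (v t) ^ 5 - (1 / 2) * (v t) ^ 6 * u t)
    (hsys2 : ∀ t ∈ U, deriv u t =
      (1 / 8) * t ^ 2 * v t + (3 / 8) * t * (v t) ^ 2 - (t * u t - 1 / 4) * (v t) ^ 3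
        - (5 / 4) * (v t) ^ 4 * u t + (3 / 2) * (v t) ^ 5 * (u t) ^ 2)
    (x y : ℂ → ℂ)
    (hx : ∀ t, x t = 1 / (v t) ^ 2)
    (hy : ∀ t, y t = -2 / (v t) ^ 3 - (t / 2) * v t - (1 / 2) * (v t) ^ 2 + u t * (v t) ^ 3) :
    (∀ t ∈ U, DifferentiableAt ℂ x t) ∧ (∀ t ∈ U, DifferentiableAt ℂ y t) ∧
    (∀ t ∈ U, deriv x t = y t) ∧ (∀ t ∈ U, deriv y t = 6 * (x t) ^ 2 + t) :=
  double_covering_to_painleveI_general U v u hv hu hvne hsys1 hsys2 x y hx hy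
end

section
/- Let t₀ ∈ ℂ with t₀ ≠ 0, let n ≥ 1 be a natural number, and let g be a function that is analytic on an open disc D centered at t₀ with g(t₀) = a ≠ 0. Suppose q(t) := g(t)/(t − t₀)ⁿ is nonvanishing on D ∖ {t₀} and satisfies equation (DPI): d²q/dt² = (3/q)(dq/dt)² − (t/2)q³ − 3/q on D ∖ {t₀}. Then n = 1 and t₀·a² = 2 (i.e. the leading coefficient is a = ±√(2t₀)/t₀). -/
/-!
Multiplying (DPI) by `q` turns it into `q q'' - 3 q'² + (t/2) q⁴ + 3 = 0`. Substituting
`q = g / (t - t₀)^(k+1)` and clearing the factor `(t - t₀)^(-4k-4)` gives an expression `B(t)`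
(`DPI.poleBalance`) in `t - t₀`, `g`, `g'`, `g''` that vanishes on the punctured disc and is
continuous at `t₀`, so `B(t₀) = 0`. At `t₀` only the terms `-(k+1)(2k+1) a² (t - t₀)^(2k)` and
`(t₀/2) a⁴` survive: for `k ≥ 1` this forces `t₀ a⁴ = 0`, and for `k = 0` it reads
`a² (t₀ a² - 2) = 0`.
-/

open Metric Filter Topology

theorem hasDerivAt_div_sub_pow {𝕜 : Type*} [NontriviallyNormedField 𝕜] {f : 𝕜 → 𝕜}
    {f' c x : 𝕜} (hf : HasDerivAt f f' x) (hx : x ≠ c) (m : ℕ) :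
    HasDerivAt (fun y => f y / (y - c) ^ m)
      (f' / (x - c) ^ m - m * f x / (x - c) ^ (m + 1)) x := by
  have hs : x - c ≠ 0 := sub_ne_zero.mpr hx
  refine (hf.div (((hasDerivAt_id x).sub_const c).pow m) (pow_ne_zero m hs)).congr_deriv ?_
  rcases m with _ | m
  · simp
  · simp only [Pi.pow_apply, id]
    field_simp
    push_cast
    ring

theorem hasDerivAt_deriv_div_sub_pow {𝕜 : Type*} [NontriviallyNormedField 𝕜] {f : 𝕜 → 𝕜}
    {s : Set 𝕜} {c x : 𝕜} (hs : IsOpen s) (hcs : c ∉ s) (hf : ∀ y ∈ s, DifferentiableAt 𝕜 f y)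
    (hf' : DifferentiableAt 𝕜 (deriv f) x) (hx : x ∈ s) (m : ℕ) :
    HasDerivAt (deriv fun y => f y / (y - c) ^ m)
      (deriv (deriv f) x / (x - c) ^ m - m * deriv f x / (x - c) ^ (m + 1)
        - (m * deriv f x / (x - c) ^ (m + 1) - (m + 1 : ℕ) * (m * f x) / (x - c) ^ (m + 2))) x := by
  have hne : ∀ y ∈ s, y ≠ c := fun y hy hyc => hcs (hyc ▸ hy)
  have hderiv : (deriv fun y => f y / (y - c) ^ m) =ᶠ[𝓝 x]
      fun y => deriv f y / (y - c) ^ m - m * f y / (y - c) ^ (m + 1) :=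
    eventuallyEq_of_mem (hs.mem_nhds hx) fun y hy =>
      (hasDerivAt_div_sub_pow (hf y hy).hasDerivAt (hne y hy) m).deriv
  exact ((hasDerivAt_div_sub_pow hf'.hasDerivAt (hne x hx) m).sub
    (hasDerivAt_div_sub_pow ((hf x hx).hasDerivAt.const_mul _) (hne x hx) _)).congr_of_eventuallyEq
      hderiv

namespace DPI

variable {K : Type*} [Field K]

theorem mul_form_of_ode {t q q₁ q₂ : K} (hq : q ≠ 0)
    (hode : q₂ = 3 / q * q₁ ^ 2 - t / 2 * q ^ 3 - 3 / q) :
    q * q₂ - 3 * q₁ ^ 2 + t / 2 * q ^ 4 + 3 = 0 := by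
  rw [hode]
  field_simp
  ring

/-- `(t - t₀)^(4k+4) (q q'' - 3 q'² + (t/2) q⁴ + 3)` for `q = g / (t - t₀)^(k+1)`, written in terms
of `s = t - t₀` and `g`, `g₁ = g'`, `g₂ = g''`. -/
def poleBalance (k : ℕ) (t s g g₁ g₂ : K) : K :=
  s ^ (2 * k) * ((g * g₂ - 3 * g₁ ^ 2) * s ^ 2 + 4 * (k + 1) * g * g₁ * s
    - (k + 1) * (2 * k + 1) * g ^ 2) + t / 2 * g ^ 4 + 3 * s ^ (4 * k + 4)

theorem poleBalance_eq {k : ℕ} {t s g g₁ g₂ q q₁ q₂ : K} (hs : s ≠ 0)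
    (hq : q = g / s ^ (k + 1))
    (hq₁ : q₁ = g₁ / s ^ (k + 1) - (k + 1 : ℕ) * g / s ^ (k + 2))
    (hq₂ : q₂ = g₂ / s ^ (k + 1) - (k + 1 : ℕ) * g₁ / s ^ (k + 2)
      - ((k + 1 : ℕ) * g₁ / s ^ (k + 2) - (k + 2 : ℕ) * ((k + 1 : ℕ) * g) / s ^ (k + 3))) :
    poleBalance k t s g g₁ g₂ = s ^ (4 * k + 4) * (q * q₂ - 3 * q₁ ^ 2 + t / 2 * q ^ 4 + 3) := by
  subst hq hq₁ hq₂
  unfold poleBalance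
  push_cast
  field_simp
  ring

theorem continuousAt_poleBalance {𝕜 : Type*} [NontriviallyNormedField 𝕜] {k : ℕ}
    {g g₁ g₂ : 𝕜 → 𝕜} {c x : 𝕜} (hg : ContinuousAt g x) (hg₁ : ContinuousAt g₁ x)
    (hg₂ : ContinuousAt g₂ x) :
    ContinuousAt (fun t => poleBalance k t (t - c) (g t) (g₁ t) (g₂ t)) x := by
  unfold poleBalance
  fun_prop

theorem eq_zero_and_mul_sq_of_poleBalance_zero [CharZero K] {k : ℕ} {t a g₁ g₂ : K} (ht : t ≠ 0)
    (ha : a ≠ 0) (h : poleBalance k t 0 a g₁ g₂ = 0) : k = 0 ∧ t * a ^ 2 = 2 := by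
  unfold poleBalance at h
  rcases k with _ | k
  · refine ⟨rfl, ?_⟩
    have : a ^ 2 * (t * a ^ 2 - 2) = 0 := by linear_combination 2 * h
    simpa [ha, sub_eq_zero] using this
  · simp [ht, ha] at h

end DPI

/-- Leading-order Painlevé test for (DPI): a movable pole of the equation
d²q/dt² = (3/q)(dq/dt)² − (t/2)q³ − 3/q at t₀ ≠ 0 must be simple, with
leading coefficient a satisfying t₀·a² = 2, i.e. a = ±√(2t₀)/t₀. -/
theorem DPI_leading_order_painleve_test
    (t₀ : ℂ) (ht₀ : t₀ ≠ 0) (n : ℕ) (hn : 1 ≤ n)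
    (r : ℝ) (hr : 0 < r) (g : ℂ → ℂ)
    (hg : ∀ t ∈ Metric.ball t₀ r, AnalyticAt ℂ g t)
    (a : ℂ) (ha : g t₀ = a) (hane : a ≠ 0)
    (q : ℂ → ℂ) (hq : ∀ t, q t = g t / (t - t₀) ^ n)
    (hqne : ∀ t ∈ Metric.ball t₀ r \ {t₀}, q t ≠ 0)
    (hode : ∀ t ∈ Metric.ball t₀ r \ {t₀}, deriv (deriv q) t =
      (3 / q t) * (deriv q t) ^ 2 - (t / 2) * (q t) ^ 3 - 3 / q t) :
    n = 1 ∧ t₀ * a ^ 2 = 2 := by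
  obtain ⟨k, rfl⟩ : ∃ k, n = k + 1 := ⟨n - 1, by omega⟩
  obtain rfl : q = fun t => g t / (t - t₀) ^ (k + 1) := funext hq
  have hg₁ : AnalyticOnNhd ℂ (deriv g) (ball t₀ r) := AnalyticOnNhd.deriv hg
  have hg₂ : AnalyticOnNhd ℂ (deriv (deriv g)) (ball t₀ r) := hg₁.deriv
  have hgU : ∀ t ∈ ball t₀ r \ {t₀}, DifferentiableAt ℂ g t :=
    fun t ht => (hg t ht.1).differentiableAt
  set B := fun t => DPI.poleBalance k t (t - t₀) (g t) (deriv g t) (deriv (deriv g) t)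
  have hB : ∀ t ∈ ball t₀ r \ {t₀}, B t = 0 := fun t ht => by
    simp only [B]
    rw [DPI.poleBalance_eq (sub_ne_zero.mpr ht.2) rfl
      (hasDerivAt_div_sub_pow (hgU t ht).hasDerivAt ht.2 _).deriv
      (hasDerivAt_deriv_div_sub_pow (isOpen_ball.sdiff isClosed_singleton) (by simp) hgU
        (hg₁ t ht.1).differentiableAt ht _).deriv,
      DPI.mul_form_of_ode (hqne t ht) (hode t ht), mul_zero]
  have hB_cont : ContinuousAt B t₀ := by
    have ht₀_mem : t₀ ∈ ball t₀ r := mem_ball_self hr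
    exact DPI.continuousAt_poleBalance (hg t₀ ht₀_mem).continuousAt
      (hg₁ t₀ ht₀_mem).continuousAt (hg₂ t₀ ht₀_mem).continuousAt
  have hB₀ : B t₀ = 0 :=
    ((hB_cont.eventuallyEq_nhds_iff_eventuallyEq_nhdsNE continuousAt_const).1
      (eventuallyEq_of_mem (sdiff_mem_nhdsWithin_compl (ball_mem_nhds t₀ hr) _) hB)).eq_of_nhds
  simp only [B, sub_self, ha] at hB₀
  simpa using DPI.eq_zero_and_mul_sq_of_poleBalance_zero ht₀ hane hB₀
end

section
/- Let t₀ ∈ ℂ, let n ≥ 1 be a natural number, and let g be a function that is analytic on an open disc D centered at t₀ with g(t₀) = a ≠ 0. Suppose Q(t) := g(t)/(t − t₀)ⁿ is nonvanishing on D ∖ {t₀} and satisfies equation (DPIB): d²Q/dt² = −(1/Q)(dQ/dt)² + 3Q³ + t/(2Q) on D ∖ {t₀}. Then n = 1 and a² = 1, i.e. a = 1 or a = −1. -/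
/-!
Multiplying (DPIB) by `Q` gives `Q Q'' + Q'² = 3 Q⁴ + t / 2`. For `Q = g / (t - t₀)ⁿ` the left
side has a pole of order `2n + 2` with leading coefficient `n (2n + 1) a²`, while `3 Q⁴` has a pole
of order `4n` with leading coefficient `3 a⁴`. Clearing denominators and letting `t → t₀` balances
the two: for `n ≥ 2` the left side vanishes in the limit although `3 a⁴ ≠ 0`, and for `n = 1` it
forces `3 a² = 3 a⁴`.
-/

open Metric Filter Topology

section PoleDerivatives

variable {𝕜 : Type*} [NontriviallyNormedField 𝕜] {g : 𝕜 → 𝕜} {z₀ z : 𝕜}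

theorem hasDerivAt_div_sub_pow_s5 (k : ℕ) (hg : DifferentiableAt 𝕜 g z) (hz : z ≠ z₀) :
    HasDerivAt (fun w => g w / (w - z₀) ^ k)
      ((deriv g z * (z - z₀) - k * g z) / (z - z₀) ^ (k + 1)) z := by
  have hu : z - z₀ ≠ 0 := sub_ne_zero.2 hz
  have hpow : HasDerivAt (fun w => (w - z₀) ^ k) (k * (z - z₀) ^ (k - 1)) z := by
    simpa using ((hasDerivAt_id z).sub_const z₀).fun_pow k
  refine (hg.hasDerivAt.fun_div hpow (pow_ne_zero k hu)).congr_deriv ?_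
  rcases k with _ | k
  · simp [hu]
  · rw [Nat.add_sub_cancel]
    field_simp
    ring

theorem deriv_deriv_div_sub_pow (k : ℕ) (hg : ∀ᶠ w in 𝓝 z, DifferentiableAt 𝕜 g w)
    (hg' : DifferentiableAt 𝕜 (deriv g) z) (hz : z ≠ z₀) :
    deriv (deriv fun w => g w / (w - z₀) ^ k) z =
      (deriv (deriv g) z * (z - z₀) ^ 2 - 2 * k * deriv g z * (z - z₀) + k * (k + 1) * g z) /
        (z - z₀) ^ (k + 2) := by
  have hfirst : deriv (fun w => g w / (w - z₀) ^ k) =ᶠ[𝓝 z]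
      fun w => (deriv g w * (w - z₀) - k * g w) / (w - z₀) ^ (k + 1) := by
    filter_upwards [hg, eventually_ne_nhds hz] with w hw hwz
    exact (hasDerivAt_div_sub_pow_s5 k hw hwz).deriv
  have hnum : HasDerivAt (fun w => deriv g w * (w - z₀) - k * g w)
      (deriv (deriv g) z * (z - z₀) + deriv g z * 1 - k * deriv g z) z :=
    (hg'.hasDerivAt.fun_mul ((hasDerivAt_id z).sub_const z₀)).fun_sub
      (hg.self_of_nhds.hasDerivAt.const_mul (k : 𝕜))
  rw [hfirst.deriv_eq, (hasDerivAt_div_sub_pow_s5 (k + 1) hnum.differentiableAt hz).deriv, hnum.deriv]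
  have hu : z - z₀ ≠ 0 := sub_ne_zero.2 hz
  field_simp
  push_cast
  ring

-- `(Q Q'' + Q'²) (z - z₀) ^ (2k + 2)` for `Q = g / (z - z₀) ^ k`, i.e. half the numerator of `(Q²)''`.
noncomputable def poleNumerator (k : ℕ) (z₀ : 𝕜) (g : 𝕜 → 𝕜) (z : 𝕜) : 𝕜 :=
  g z * (deriv (deriv g) z * (z - z₀) ^ 2 - 2 * k * deriv g z * (z - z₀) + k * (k + 1) * g z) +
    (deriv g z * (z - z₀) - k * g z) ^ 2

theorem poleNumerator_self (k : ℕ) : poleNumerator k z₀ g z₀ = k * (2 * k + 1) * g z₀ ^ 2 := by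
  simp only [poleNumerator, sub_self]
  ring

theorem mul_deriv_deriv_add_sq_deriv_div_sub_pow (k : ℕ)
    (hg : ∀ᶠ w in 𝓝 z, DifferentiableAt 𝕜 g w) (hg' : DifferentiableAt 𝕜 (deriv g) z)
    (hz : z ≠ z₀) :
    g z / (z - z₀) ^ k * deriv (deriv fun w => g w / (w - z₀) ^ k) z +
        deriv (fun w => g w / (w - z₀) ^ k) z ^ 2 =
      poleNumerator k z₀ g z / (z - z₀) ^ (2 * k + 2) := by
  rw [deriv_deriv_div_sub_pow k hg hg' hz, (hasDerivAt_div_sub_pow_s5 k hg.self_of_nhds hz).deriv]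
  have hu : z - z₀ ≠ 0 := sub_ne_zero.2 hz
  field_simp
  rw [poleNumerator]
  ring

end PoleDerivatives

theorem dpib_sub_pow_mul_poleNumerator {g Q : ℂ → ℂ} {t₀ t : ℂ} (m : ℕ)
    (hQ : Q = fun w => g w / (w - t₀) ^ (m + 1))
    (hg : ∀ᶠ w in 𝓝 t, DifferentiableAt ℂ g w) (hg' : DifferentiableAt ℂ (deriv g) t)
    (ht : t ≠ t₀) (hQt : Q t ≠ 0)
    (hode : deriv (deriv Q) t = -(1 / Q t) * (deriv Q t) ^ 2 + 3 * (Q t) ^ 3 + t / (2 * Q t)) :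
    (t - t₀) ^ (2 * m) * poleNumerator (m + 1) t₀ g t =
      3 * g t ^ 4 + t / 2 * (t - t₀) ^ (4 * m + 4) := by
  have hsum : Q t * deriv (deriv Q) t + deriv Q t ^ 2 = 3 * Q t ^ 4 + t / 2 := by
    rw [hode]
    field_simp
    ring
  subst hQ
  rw [mul_deriv_deriv_add_sq_deriv_div_sub_pow (m + 1) hg hg' ht] at hsum
  have hu : t - t₀ ≠ 0 := sub_ne_zero.2 ht
  field_simp at hsum
  refine mul_left_cancel₀ (pow_ne_zero (2 * m + 4) hu) ?_
  linear_combination hsum / 2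

theorem dpib_pole_balance {g Q : ℂ → ℂ} {t₀ : ℂ} (m : ℕ)
    (hQ : Q = fun w => g w / (w - t₀) ^ (m + 1))
    (hg : ∀ᶠ t in 𝓝 t₀, AnalyticAt ℂ g t)
    (hode : ∀ᶠ t in 𝓝[≠] t₀, Q t ≠ 0 ∧ deriv (deriv Q) t =
      -(1 / Q t) * (deriv Q t) ^ 2 + 3 * (Q t) ^ 3 + t / (2 * Q t)) :
    (0 : ℂ) ^ (2 * m) * poleNumerator (m + 1) t₀ g t₀ = 3 * g t₀ ^ 4 := by
  have hg₀ : AnalyticAt ℂ g t₀ := hg.self_of_nhds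
  have hcont : ContinuousAt (fun t => (t - t₀) ^ (2 * m) * poleNumerator (m + 1) t₀ g t) t₀ := by
    have := hg₀.continuousAt
    have := hg₀.deriv.continuousAt
    have := hg₀.deriv.deriv.continuousAt
    unfold poleNumerator
    fun_prop
  have hagree : (fun t => (t - t₀) ^ (2 * m) * poleNumerator (m + 1) t₀ g t) =ᶠ[𝓝[≠] t₀]
      fun t => 3 * g t ^ 4 + t / 2 * (t - t₀) ^ (4 * m + 4) := by
    filter_upwards [hode, self_mem_nhdsWithin,
      eventually_nhdsWithin_of_eventually_nhds hg.eventually_nhds] with t ⟨hQt, hodet⟩ ht hgt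
    exact dpib_sub_pow_mul_poleNumerator m hQ (hgt.mono fun _ h => h.differentiableAt)
      hgt.self_of_nhds.deriv.differentiableAt ht hQt hodet
  have hcont' : ContinuousAt (fun t => 3 * g t ^ 4 + t / 2 * (t - t₀) ^ (4 * m + 4)) t₀ := by
    have := hg₀.continuousAt
    fun_prop
  simpa using ((hcont.eventuallyEq_nhds_iff_eventuallyEq_nhdsNE hcont').1 hagree).eq_of_nhds

/-- Leading-order Painlevé test for (DPIB): a movable pole of the equation
d²Q/dt² = −(1/Q)(dQ/dt)² + 3Q³ + t/(2Q) at t₀ must be simple, with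
leading coefficient a = 1 or a = −1. -/
theorem DPIB_leading_order_painleve_test
    (t₀ : ℂ) (n : ℕ) (hn : 1 ≤ n)
    (r : ℝ) (hr : 0 < r) (g : ℂ → ℂ)
    (hg : ∀ t ∈ Metric.ball t₀ r, AnalyticAt ℂ g t)
    (a : ℂ) (ha : g t₀ = a) (hane : a ≠ 0)
    (Q : ℂ → ℂ) (hQ : ∀ t, Q t = g t / (t - t₀) ^ n)
    (hQne : ∀ t ∈ Metric.ball t₀ r \ {t₀}, Q t ≠ 0)
    (hode : ∀ t ∈ Metric.ball t₀ r \ {t₀}, deriv (deriv Q) t =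
      -(1 / Q t) * (deriv Q t) ^ 2 + 3 * (Q t) ^ 3 + t / (2 * Q t)) :
    n = 1 ∧ (a = 1 ∨ a = -1) := by
  obtain ⟨m, rfl⟩ := Nat.exists_eq_add_of_le' hn
  have hball : ball t₀ r ∈ 𝓝 t₀ := ball_mem_nhds t₀ hr
  have hbalance := dpib_pole_balance m (funext hQ) (mem_of_superset hball hg)
    (mem_of_superset (sdiff_mem_nhdsWithin_compl hball {t₀}) fun t ht =>
      ⟨hQne t ht, hode t ht⟩)
  rw [poleNumerator_self, ha] at hbalance
  rcases m with _ | m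
  · refine ⟨rfl, ?_⟩
    have hsq : a ^ 2 * ((a - 1) * (a + 1)) = 0 := by linear_combination -hbalance / 3
    simpa [hane, sub_eq_zero, add_eq_zero_iff_eq_neg] using hsq
  · simp [hane] at hbalance
end

section
/- Fix t₀ ∈ ℂ and a₅ ∈ ℂ, and define g : ℂ ∖ {t₀} → ℂ by g(t) = (t − t₀)⁻¹ − (t₀/20)(t − t₀)³ − (1/12)(t − t₀)⁴ + a₅(t − t₀)⁵. Then the residual r(t) := g(t)·g''(t) + (g'(t))² − 3g(t)⁴ − t/2 satisfies r(t)/(t − t₀)² → 0 as t → t₀ with t ≠ t₀ (i.e. r(t) = o((t − t₀)²)); in particular the displayed coefficients are exactly those forced by equation (DPIB), with a₅ a free parameter at the resonance. -/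
/-! Put `s = t - t₀` and `g = s⁻¹ (1 + e)` with `e = -(t₀ / 20) s⁴ - s⁵ / 12 + a₅ s⁶`. Then `s⁴`
times the residual is `L e - (t₀ + s) s⁴ / 2` plus terms of degree at least two in `e`, where
`L = s² D² - 4 s D - 6` linearises the equation at its leading term `s⁻¹`. As
`L sᵏ = (k + 1) (k - 6) sᵏ`, the coefficients of `s⁴` and `s⁵` in `e` are exactly those making the
first part vanish, whatever `a₅` (`k = 6` is the resonance); the remaining terms are `O(s⁸)`, so the
residual is `O(s⁴)`. -/

open Filter Topology Set

theorem Set.EqOn.deriv_comp_sub_const {𝕜 F : Type*} [NontriviallyNormedField 𝕜]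
    [NormedAddCommGroup F] [NormedSpace 𝕜 F] {f G : 𝕜 → F} {U : Set 𝕜} {a : 𝕜}
    (h : EqOn f (fun x => G (x - a)) U) (hU : IsOpen U) :
    EqOn (_root_.deriv f) (fun x => _root_.deriv G (x - a)) U := fun x hx => by
  rw [h.deriv hU hx, _root_.deriv_comp_sub_const]

theorem tendsto_sub_const_nhdsNE {G : Type*} [AddGroup G] [TopologicalSpace G]
    [IsTopologicalAddGroup G] (a : G) : Tendsto (· - a) (𝓝[≠] a) (𝓝[≠] 0) := by
  rw [← sub_self a]
  exact map_subRight_nhdsNE.le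

section InvMulOneAdd

variable {e e₁ e₂ : ℂ → ℂ}

theorem deriv_inv_mul_one_add (he : ∀ x, HasDerivAt e (e₁ x) x) {s : ℂ} (hs : s ≠ 0) :
    deriv (fun x => x⁻¹ * (1 + e x)) s = s⁻¹ ^ 2 * (s * e₁ s - (1 + e s)) := by
  refine ((hasDerivAt_inv hs).mul ((he s).const_add 1)).deriv.trans ?_
  field_simp
  ring

theorem deriv_deriv_inv_mul_one_add (he : ∀ x, HasDerivAt e (e₁ x) x)
    (he₁ : ∀ x, HasDerivAt e₁ (e₂ x) x) {s : ℂ} (hs : s ≠ 0) :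
    deriv (deriv fun x => x⁻¹ * (1 + e x)) s =
      s⁻¹ ^ 3 * (s ^ 2 * e₂ s - 2 * s * e₁ s + 2 * (1 + e s)) := by
  have hderiv : EqOn (deriv fun x => x⁻¹ * (1 + e x))
      (fun x => x⁻¹ ^ 2 * (x * e₁ x - (1 + e x))) {0}ᶜ :=
    fun x hx => deriv_inv_mul_one_add he hx
  rw [hderiv.deriv isOpen_compl_singleton hs]
  refine (((hasDerivAt_inv hs).fun_pow 2).fun_mul
    (((hasDerivAt_id' s).fun_mul (he₁ s)).fun_sub ((he s).const_add 1))).deriv.trans ?_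
  simp only [Nat.cast_ofNat, Nat.reduceSub, pow_one]
  field_simp
  ring

end InvMulOneAdd

def dpibNonlinearPart (s e e₁ e₂ : ℂ) : ℂ :=
  s ^ 2 * (e * e₂ + e₁ ^ 2) - 4 * s * e * e₁ - 15 * e ^ 2 - 12 * e ^ 3 - 3 * e ^ 4

theorem dpib_expansion_at_pole (s e e₁ e₂ : ℂ) (hs : s ≠ 0) :
    s⁻¹ * (1 + e) * (s⁻¹ ^ 3 * (s ^ 2 * e₂ - 2 * s * e₁ + 2 * (1 + e)))
        + (s⁻¹ ^ 2 * (s * e₁ - (1 + e))) ^ 2 - 3 * (s⁻¹ * (1 + e)) ^ 4 =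
      s⁻¹ ^ 4 * (s ^ 2 * e₂ - 4 * s * e₁ - 6 * e + dpibNonlinearPart s e e₁ e₂) := by
  unfold dpibNonlinearPart
  field_simp
  ring

theorem tendsto_dpibNonlinearPart_div_pow_six {c₀ c₁ c₂ : ℂ → ℂ} (h₀ : ContinuousAt c₀ 0)
    (h₁ : ContinuousAt c₁ 0) (h₂ : ContinuousAt c₂ 0) :
    Tendsto (fun s => dpibNonlinearPart s (s ^ 4 * c₀ s) (s ^ 3 * c₁ s) (s ^ 2 * c₂ s) / s ^ 6)
      (𝓝[≠] 0) (𝓝 0) := by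
  have hcont : ContinuousAt (fun s => s ^ 2 * (c₀ s * c₂ s + c₁ s ^ 2 - 4 * c₀ s * c₁ s
      - 15 * c₀ s ^ 2 - 12 * s ^ 4 * c₀ s ^ 3 - 3 * s ^ 8 * c₀ s ^ 4)) 0 := by
    fun_prop
  have hlim := hcont.tendsto.mono_left (nhdsWithin_le_nhds (s := {0}ᶜ))
  simp only [zero_pow two_ne_zero, zero_mul] at hlim
  refine hlim.congr' ?_
  filter_upwards [self_mem_nhdsWithin] with s (hs : s ≠ 0)
  unfold dpibNonlinearPart
  field_simp

-- The correction `e` of the header is `s⁴ * dpibCofactor₀`, with `e' = s³ * dpibCofactor₁` and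
-- `e'' = s² * dpibCofactor₂`.
noncomputable def dpibCofactor₀ (t₀ a₅ s : ℂ) : ℂ := -(t₀ / 20) - s / 12 + a₅ * s ^ 2

noncomputable def dpibCofactor₁ (t₀ a₅ s : ℂ) : ℂ := -(t₀ / 5) - 5 * s / 12 + 6 * a₅ * s ^ 2

noncomputable def dpibCofactor₂ (t₀ a₅ s : ℂ) : ℂ :=
  -(3 * t₀ / 5) - 5 * s / 3 + 30 * a₅ * s ^ 2

section DPIBCorrection

variable (t₀ a₅ s : ℂ)

theorem hasDerivAt_pow_four_mul_dpibCofactor₀ :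
    HasDerivAt (fun x => x ^ 4 * dpibCofactor₀ t₀ a₅ x) (s ^ 3 * dpibCofactor₁ t₀ a₅ s) s := by
  refine ((hasDerivAt_pow 4 s).fun_mul (((hasDerivAt_const s (-(t₀ / 20))).fun_sub
    ((hasDerivAt_id' s).div_const 12)).fun_add ((hasDerivAt_pow 2 s).const_mul a₅))).congr_deriv ?_
  simp only [dpibCofactor₁]
  push_cast
  ring

theorem hasDerivAt_pow_three_mul_dpibCofactor₁ :
    HasDerivAt (fun x => x ^ 3 * dpibCofactor₁ t₀ a₅ x) (s ^ 2 * dpibCofactor₂ t₀ a₅ s) s := by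
  refine ((hasDerivAt_pow 3 s).fun_mul (((hasDerivAt_const s (-(t₀ / 5))).fun_sub
    (((hasDerivAt_id' s).const_mul 5).div_const 12)).fun_add
      ((hasDerivAt_pow 2 s).const_mul (6 * a₅)))).congr_deriv ?_
  simp only [dpibCofactor₂]
  push_cast
  ring

theorem dpib_series_eq_inv_mul {s : ℂ} (hs : s ≠ 0) :
    s⁻¹ - (t₀ / 20) * s ^ 3 - (1 / 12) * s ^ 4 + a₅ * s ^ 5 =
      s⁻¹ * (1 + s ^ 4 * dpibCofactor₀ t₀ a₅ s) := by
  rw [dpibCofactor₀]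
  field_simp
  ring

theorem dpib_linearization_pow_four_mul_dpibCofactor₀ :
    s ^ 2 * (s ^ 2 * dpibCofactor₂ t₀ a₅ s) - 4 * s * (s ^ 3 * dpibCofactor₁ t₀ a₅ s)
      - 6 * (s ^ 4 * dpibCofactor₀ t₀ a₅ s) = (t₀ + s) * s ^ 4 / 2 := by
  simp only [dpibCofactor₀, dpibCofactor₁, dpibCofactor₂]
  ring

end DPIBCorrection

/-- The truncated series (formal.sol2) for equation (DPIB):
g(t) = (t−t₀)⁻¹ − (t₀/20)(t−t₀)³ − (1/12)(t−t₀)⁴ + a₅(t−t₀)⁵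
satisfies g·g'' + (g')² − 3g⁴ − t/2 = o((t−t₀)²) as t → t₀, t ≠ t₀. -/
theorem DPIB_series_residual
    (t₀ a₅ : ℂ) (g : ℂ → ℂ)
    (hg : ∀ t : ℂ, t ≠ t₀ → g t =
      (t - t₀)⁻¹ - (t₀ / 20) * (t - t₀) ^ 3 - (1 / 12) * (t - t₀) ^ 4
        + a₅ * (t - t₀) ^ 5) :
    Tendsto (fun t : ℂ =>
        (g t * deriv (deriv g) t + (deriv g t) ^ 2 - 3 * (g t) ^ 4 - t / 2) / (t - t₀) ^ 2)
      (𝓝[≠] t₀) (𝓝 0) := by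
  have hG : EqOn g (fun t => (t - t₀)⁻¹ * (1 + (t - t₀) ^ 4 * dpibCofactor₀ t₀ a₅ (t - t₀)))
      {t₀}ᶜ := fun t ht => (hg t ht).trans (dpib_series_eq_inv_mul t₀ a₅ (sub_ne_zero.mpr ht))
  have h₁ := hG.deriv_comp_sub_const
    (G := fun s => s⁻¹ * (1 + s ^ 4 * dpibCofactor₀ t₀ a₅ s)) isOpen_compl_singleton
  have h₂ := h₁.deriv_comp_sub_const isOpen_compl_singleton
  have he := hasDerivAt_pow_four_mul_dpibCofactor₀ t₀ a₅
  have he₁ := hasDerivAt_pow_three_mul_dpibCofactor₁ t₀ a₅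
  have hquot : EqOn (fun t => dpibNonlinearPart (t - t₀)
        ((t - t₀) ^ 4 * dpibCofactor₀ t₀ a₅ (t - t₀)) ((t - t₀) ^ 3 * dpibCofactor₁ t₀ a₅ (t - t₀))
        ((t - t₀) ^ 2 * dpibCofactor₂ t₀ a₅ (t - t₀)) / (t - t₀) ^ 6)
      (fun t => (g t * deriv (deriv g) t + (deriv g t) ^ 2 - 3 * (g t) ^ 4 - t / 2)
        / (t - t₀) ^ 2) {t₀}ᶜ := fun t ht => by
    have hs : t - t₀ ≠ 0 := sub_ne_zero.mpr ht
    simp only [hG ht, h₁ ht, h₂ ht, deriv_inv_mul_one_add he hs,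
      deriv_deriv_inv_mul_one_add he he₁ hs, dpib_expansion_at_pole _ _ _ _ hs,
      dpib_linearization_pow_four_mul_dpibCofactor₀]
    field_simp
    ring
  refine ((tendsto_dpibNonlinearPart_div_pow_six ?_ ?_ ?_).comp
    (tendsto_sub_const_nhdsNE t₀)).congr'
    (eventuallyEq_nhdsWithin_of_eqOn hquot)
  · unfold dpibCofactor₀; fun_prop
  · unfold dpibCofactor₁; fun_prop
  · unfold dpibCofactor₂; fun_prop
end

section
/- Let a ∈ ℂ with a⁵ = −1 (so that a⁴ = −1/a). Let v, u : ℂ → ℂ be differentiable functions satisfying system (6) on all of ℂ. Define V(t) := −a·v(a⁴t) and U(t) := a⁴·u(a⁴t). Then the pair (V, U) is differentiable and again satisfies system (6) on ℂ. (This is the birational symmetry s₀ : (v, u, t) ↦ (−av, a⁴u, −at) of system (6).) -/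
/-- The birational symmetry s₀ : (v, u, t) ↦ (−av, a⁴u, −at), a⁵ = −1, of system (6):
if (v, u) solves system (6) on ℂ, then so does (V, W) with V(t) = −a·v(a⁴t),
W(t) = a⁴·u(a⁴t). -/
theorem symmetry_s0_of_system6
    (a : ℂ) (ha : a ^ 5 = -1)
    (v u : ℂ → ℂ) (hv : Differentiable ℂ v) (hu : Differentiable ℂ u)
    (hsys1 : ∀ t : ℂ, deriv v t =
      1 + (t / 4) * (v t) ^ 4 + (1 / 4) * (v t) ^ 5 - (1 / 2) * (v t) ^ 6 * u t)
    (hsys2 : ∀ t : ℂ, deriv u t =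
      (1 / 8) * t ^ 2 * v t + (3 / 8) * t * (v t) ^ 2 - (t * u t - 1 / 4) * (v t) ^ 3
        - (5 / 4) * (v t) ^ 4 * u t + (3 / 2) * (v t) ^ 5 * (u t) ^ 2)
    (V W : ℂ → ℂ)
    (hV : ∀ t, V t = -a * v (a ^ 4 * t)) (hW : ∀ t, W t = a ^ 4 * u (a ^ 4 * t)) :
    Differentiable ℂ V ∧ Differentiable ℂ W ∧
    (∀ t : ℂ, deriv V t =
      1 + (t / 4) * (V t) ^ 4 + (1 / 4) * (V t) ^ 5 - (1 / 2) * (V t) ^ 6 * W t) ∧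
    (∀ t : ℂ, deriv W t =
      (1 / 8) * t ^ 2 * V t + (3 / 8) * t * (V t) ^ 2 - (t * W t - 1 / 4) * (V t) ^ 3
        - (5 / 4) * (V t) ^ 4 * W t + (3 / 2) * (V t) ^ 5 * (W t) ^ 2) := by
  have hVd : V = fun t => -a * v (a ^ 4 * t) := funext hV
  have hWd : W = fun t => a ^ 4 * u (a ^ 4 * t) := funext hW
  have hinner : ∀ t : ℂ, HasDerivAt (fun x : ℂ => a ^ 4 * x) (a ^ 4) t := by
    intro t
    simpa using (hasDerivAt_id t).const_mul (a ^ 4)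
  have hdV : ∀ t : ℂ, HasDerivAt V (-a * (deriv v (a ^ 4 * t) * a ^ 4)) t := by
    intro t
    rw [hVd]
    exact (((hv (a ^ 4 * t)).hasDerivAt.comp t (hinner t))).const_mul (-a)
  have hdW : ∀ t : ℂ, HasDerivAt W (a ^ 4 * (deriv u (a ^ 4 * t) * a ^ 4)) t := by
    intro t
    rw [hWd]
    exact (((hu (a ^ 4 * t)).hasDerivAt.comp t (hinner t))).const_mul (a ^ 4)
  refine ⟨fun t => (hdV t).differentiableAt, fun t => (hdW t).differentiableAt, ?_, ?_⟩
  · intro t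
    rw [(hdV t).deriv, hsys1 (a ^ 4 * t), hV t, hW t]
    linear_combination (-1 - (a ^ 4 * t / 4) * (v (a ^ 4 * t)) ^ 4
      + (a ^ 5 / 2) * (v (a ^ 4 * t)) ^ 6 * u (a ^ 4 * t)) * ha
  · intro t
    rw [(hdW t).deriv, hsys2 (a ^ 4 * t), hV t, hW t]
    linear_combination ((a / 8) * (a ^ 10 - a ^ 5 + 1) * t ^ 2 * v (a ^ 4 * t)
      + (3 * a ^ 2 / 8) * (a ^ 5 - 1) * t * (v (a ^ 4 * t)) ^ 2
      - a ^ 7 * t * u (a ^ 4 * t) * (v (a ^ 4 * t)) ^ 3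
      + (a ^ 3 / 4) * (v (a ^ 4 * t)) ^ 3
      + (3 * a ^ 8 / 2) * (v (a ^ 4 * t)) ^ 5 * (u (a ^ 4 * t)) ^ 2) * ha
end

section
/- Let U ⊆ ℂ be open and let v, u : U → ℂ be differentiable functions with v(t) ≠ 0 for all t ∈ U, satisfying system (6) on U. Define ṽ(t) := −v(t) and ũ(t) := −(u(t) − t/v(t)² − 4/v(t)⁶). Then (ṽ, ũ) is differentiable and again satisfies system (6) on U; moreover the transformation (v, u) ↦ (ṽ, ũ) is an involution: applying it twice returns (v, u). (This is the birational symmetry s₁|_{a=−1} of system (6).) -/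
/-!
Write `c = t / v² + 4 / v⁶`, so that `s₁` is `(v, u) ↦ (-v, c - u)`. By the chain rule the
transformed pair has derivatives `(-v', c' - u')`, and the right-hand sides of (6) transform the
same way: `F(t, -v, c - u) = -F(t, v, u)` and `G(t, -v, c - u) = c' - G(t, v, u)` with
`c' = 1 / v² - 2 t F / v³ - 24 F / v⁷`, two identities of rational functions. Since `c` depends
on `v` only through `v²` and `v⁶`, it is unchanged by `v ↦ -v`, which makes `s₁` an involution.
-/

def system6V {K : Type*} [Field K] (t v u : K) : K :=
  1 + (t / 4) * v ^ 4 + (1 / 4) * v ^ 5 - (1 / 2) * v ^ 6 * u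

def system6U {K : Type*} [Field K] (t v u : K) : K :=
  (1 / 8) * t ^ 2 * v + (3 / 8) * t * v ^ 2 - (t * u - 1 / 4) * v ^ 3
    - (5 / 4) * v ^ 4 * u + (3 / 2) * v ^ 5 * u ^ 2

/-- The `u`-component of `s₁`; its `v`-component is `v ↦ -v`. -/
def s1u {K : Type*} [Field K] (t v u : K) : K := -(u - t / v ^ 2 - 4 / v ^ 6)

theorem s1u_neg_s1u {K : Type*} [Field K] (t v u : K) : s1u t (-v) (s1u t v u) = u := by
  unfold s1u; ring

section Algebra

variable {K : Type*} [Field K] [CharZero K] (t : K) {v : K} (u : K)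

theorem system6V_neg_s1u (hv : v ≠ 0) : system6V t (-v) (s1u t v u) = -system6V t v u := by
  unfold system6V s1u; field_simp; ring

theorem system6U_neg_s1u (hv : v ≠ 0) :
    system6U t (-v) (s1u t v u) = -(system6U t v u - 1 / v ^ 2
      + 2 * t * system6V t v u / v ^ 3 + 24 * system6V t v u / v ^ 7) := by
  unfold system6U system6V s1u; field_simp; ring

end Algebra

theorem HasDerivAt.s1u {𝕜 : Type*} [NontriviallyNormedField 𝕜] {v u : 𝕜 → 𝕜} {v' u' t : 𝕜}
    (hv : HasDerivAt v v' t) (hu : HasDerivAt u u' t) (h0 : v t ≠ 0) :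
    HasDerivAt (fun s => s1u s (v s) (u s))
      (-(u' - 1 / v t ^ 2 + 2 * t * v' / v t ^ 3 + 24 * v' / v t ^ 7)) t := by
  refine (((hu.sub ((hasDerivAt_id t).div (hv.pow 2) (pow_ne_zero 2 h0))).sub
    ((hasDerivAt_const t (4 : 𝕜)).div (hv.pow 6) (pow_ne_zero 6 h0))).neg).congr_deriv ?_
  simp only [id, Pi.pow_apply, Nat.cast_ofNat]
  field_simp
  ring

theorem symmetry_s1_of_system6_general
    (U : Set ℂ) (v u : ℂ → ℂ)
    (hv : ∀ t ∈ U, DifferentiableAt ℂ v t) (hu : ∀ t ∈ U, DifferentiableAt ℂ u t)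
    (hvne : ∀ t ∈ U, v t ≠ 0)
    (hsys1 : ∀ t ∈ U, deriv v t =
      1 + (t / 4) * (v t) ^ 4 + (1 / 4) * (v t) ^ 5 - (1 / 2) * (v t) ^ 6 * u t)
    (hsys2 : ∀ t ∈ U, deriv u t =
      (1 / 8) * t ^ 2 * v t + (3 / 8) * t * (v t) ^ 2 - (t * u t - 1 / 4) * (v t) ^ 3
        - (5 / 4) * (v t) ^ 4 * u t + (3 / 2) * (v t) ^ 5 * (u t) ^ 2)
    (vt ut : ℂ → ℂ)
    (hvt : ∀ t, vt t = -(v t))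
    (hut : ∀ t, ut t = -(u t - t / (v t) ^ 2 - 4 / (v t) ^ 6)) :
    (∀ t ∈ U, DifferentiableAt ℂ vt t) ∧ (∀ t ∈ U, DifferentiableAt ℂ ut t) ∧
    (∀ t ∈ U, deriv vt t =
      1 + (t / 4) * (vt t) ^ 4 + (1 / 4) * (vt t) ^ 5 - (1 / 2) * (vt t) ^ 6 * ut t) ∧
    (∀ t ∈ U, deriv ut t =
      (1 / 8) * t ^ 2 * vt t + (3 / 8) * t * (vt t) ^ 2 - (t * ut t - 1 / 4) * (vt t) ^ 3
        - (5 / 4) * (vt t) ^ 4 * ut t + (3 / 2) * (vt t) ^ 5 * (ut t) ^ 2) ∧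
    (∀ t ∈ U, -(vt t) = v t ∧ -(ut t - t / (vt t) ^ 2 - 4 / (vt t) ^ 6) = u t) := by
  obtain rfl : vt = fun s => -v s := funext hvt
  obtain rfl : ut = fun s => s1u s (v s) (u s) := funext hut
  have hv' : ∀ t ∈ U, HasDerivAt v (system6V t (v t) (u t)) t := fun t ht =>
    (hv t ht).hasDerivAt.congr_deriv (hsys1 t ht)
  have hu' : ∀ t ∈ U, HasDerivAt u (system6U t (v t) (u t)) t := fun t ht =>
    (hu t ht).hasDerivAt.congr_deriv (hsys2 t ht)
  have hvt' : ∀ t ∈ U, HasDerivAt (fun s => -v s) (system6V t (-v t) (s1u t (v t) (u t))) t :=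
    fun t ht => system6V_neg_s1u t (u t) (hvne t ht) ▸ (hv' t ht).neg
  have hut' : ∀ t ∈ U, HasDerivAt (fun s => s1u s (v s) (u s))
      (system6U t (-v t) (s1u t (v t) (u t))) t := fun t ht =>
    system6U_neg_s1u t (u t) (hvne t ht) ▸ (hv' t ht).s1u (hu' t ht) (hvne t ht)
  exact ⟨fun t ht => (hvt' t ht).differentiableAt, fun t ht => (hut' t ht).differentiableAt,
    fun t ht => (hvt' t ht).deriv, fun t ht => (hut' t ht).deriv,
    fun t _ => ⟨neg_neg _, s1u_neg_s1u t (v t) (u t)⟩⟩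

/-- The birational symmetry s₁|_{a=−1} : (v, u) ↦ (−v, −(u − t/v² − 4/v⁶)) of system (6):
it takes solutions to solutions and is an involution. -/
theorem symmetry_s1_of_system6
    (U : Set ℂ) (hU : IsOpen U) (v u : ℂ → ℂ)
    (hv : ∀ t ∈ U, DifferentiableAt ℂ v t) (hu : ∀ t ∈ U, DifferentiableAt ℂ u t)
    (hvne : ∀ t ∈ U, v t ≠ 0)
    (hsys1 : ∀ t ∈ U, deriv v t =
      1 + (t / 4) * (v t) ^ 4 + (1 / 4) * (v t) ^ 5 - (1 / 2) * (v t) ^ 6 * u t)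
    (hsys2 : ∀ t ∈ U, deriv u t =
      (1 / 8) * t ^ 2 * v t + (3 / 8) * t * (v t) ^ 2 - (t * u t - 1 / 4) * (v t) ^ 3
        - (5 / 4) * (v t) ^ 4 * u t + (3 / 2) * (v t) ^ 5 * (u t) ^ 2)
    (vt ut : ℂ → ℂ)
    (hvt : ∀ t, vt t = -(v t))
    (hut : ∀ t, ut t = -(u t - t / (v t) ^ 2 - 4 / (v t) ^ 6)) :
    (∀ t ∈ U, DifferentiableAt ℂ vt t) ∧ (∀ t ∈ U, DifferentiableAt ℂ ut t) ∧
    (∀ t ∈ U, deriv vt t =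
      1 + (t / 4) * (vt t) ^ 4 + (1 / 4) * (vt t) ^ 5 - (1 / 2) * (vt t) ^ 6 * ut t) ∧
    (∀ t ∈ U, deriv ut t =
      (1 / 8) * t ^ 2 * vt t + (3 / 8) * t * (vt t) ^ 2 - (t * ut t - 1 / 4) * (vt t) ^ 3
        - (5 / 4) * (vt t) ^ 4 * ut t + (3 / 2) * (vt t) ^ 5 * (ut t) ^ 2) ∧
    (∀ t ∈ U, -(vt t) = v t ∧ -(ut t - t / (vt t) ^ 2 - 4 / (vt t) ^ 6) = u t) :=
  symmetry_s1_of_system6_general U v u hv hu hvne hsys1 hsys2 vt ut hvt hut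
end

section
/- Let U ⊆ ℂ be open and let z₁, w₁ : U → ℂ be differentiable functions with z₁(t) ≠ 0 for all t ∈ U, satisfying system (15) on U: dz₁/dt = −z₁² + w₁/2, dw₁/dt = (2t − w₁²)/(2z₁) + 4z₁w₁. Then the pair (−z₁, 4z₁² − w₁) is differentiable and again satisfies system (15) on U; moreover the map π : (z₁, w₁) ↦ (−z₁, 4z₁² − w₁) satisfies π ∘ π = id, and π interchanges the two points (0, √(2t)) and (0, −√(2t)) for every t (i.e. for any c with c² = 2t, π(0, c) = (0, −c)). -/
/-!
`π` is a polynomial involution, so the only real content is that it maps solutions to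
solutions. Writing `X_t` for the vector field of system (15) (`system15Field t`), this is the
pointwise identity `dπ_p (X_t p) = X_t (π p)` for `p.1 ≠ 0`, which the chain rule transports
along any solution curve.
-/

section Algebra

variable {K : Type*} [Field K]

def piMap (p : K × K) : K × K := (-p.1, 4 * p.1 ^ 2 - p.2)

theorem piMap_involutive : Function.Involutive (piMap : K × K → K × K) := fun p => by
  simp [piMap]

theorem piMap_mk_zero (c : K) : piMap ((0 : K), c) = (0, -c) := by
  simp [piMap]

def system15Field (t : K) (p : K × K) : K × K :=
  (-p.1 ^ 2 + p.2 / 2, (2 * t - p.2 ^ 2) / (2 * p.1) + 4 * p.1 * p.2)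

def dPiMap (p v : K × K) : K × K := (-v.1, 8 * p.1 * v.1 - v.2)

theorem dPiMap_system15Field [NeZero (2 : K)] (t : K) {p : K × K} (hp : p.1 ≠ 0) :
    dPiMap p (system15Field t p) = system15Field t (piMap p) := by
  have h2 : (2 : K) ≠ 0 := two_ne_zero
  simp only [dPiMap, system15Field, piMap, Prod.mk.injEq]
  constructor <;> field_simp <;> ring

end Algebra

theorem symmetry_pi_of_system15_general
    (U : Set ℂ) (z₁ w₁ : ℂ → ℂ)
    (hz : ∀ t ∈ U, DifferentiableAt ℂ z₁ t) (hw : ∀ t ∈ U, DifferentiableAt ℂ w₁ t)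
    (hzne : ∀ t ∈ U, z₁ t ≠ 0)
    (hsys1 : ∀ t ∈ U, deriv z₁ t = -(z₁ t) ^ 2 + w₁ t / 2)
    (hsys2 : ∀ t ∈ U, deriv w₁ t =
      (2 * t - (w₁ t) ^ 2) / (2 * z₁ t) + 4 * z₁ t * w₁ t)
    (Z W : ℂ → ℂ) (hZ : ∀ t, Z t = -(z₁ t)) (hW : ∀ t, W t = 4 * (z₁ t) ^ 2 - w₁ t)
    (π : ℂ × ℂ → ℂ × ℂ) (hπ : ∀ p : ℂ × ℂ, π p = (-p.1, 4 * p.1 ^ 2 - p.2)) :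
    (∀ t ∈ U, DifferentiableAt ℂ Z t) ∧ (∀ t ∈ U, DifferentiableAt ℂ W t) ∧
    (∀ t ∈ U, deriv Z t = -(Z t) ^ 2 + W t / 2) ∧
    (∀ t ∈ U, deriv W t = (2 * t - (W t) ^ 2) / (2 * Z t) + 4 * Z t * W t) ∧
    (∀ p : ℂ × ℂ, π (π p) = p) ∧
    (∀ t c : ℂ, c ^ 2 = 2 * t → π (0, c) = (0, -c)) := by
  have hπ' : π = piMap := funext hπ
  have hZd : ∀ t ∈ U, HasDerivAt Z (-deriv z₁ t) t := by
    intro t ht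
    rw [show Z = fun s => -z₁ s from funext hZ]
    exact (hz t ht).hasDerivAt.neg
  have hWd : ∀ t ∈ U, HasDerivAt W (8 * z₁ t * deriv z₁ t - deriv w₁ t) t := by
    intro t ht
    rw [show W = fun s => 4 * z₁ s ^ 2 - w₁ s from funext hW]
    refine ((((hz t ht).hasDerivAt.fun_pow 2).const_mul 4).fun_sub
      (hw t ht).hasDerivAt).congr_deriv ?_
    push_cast
    ring
  have hfield : ∀ t ∈ U, (deriv Z t, deriv W t) = system15Field t (Z t, W t) := by
    intro t ht
    have hsys : (deriv z₁ t, deriv w₁ t) = system15Field t (z₁ t, w₁ t) := by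
      rw [hsys1 t ht, hsys2 t ht]; rfl
    have hπZW : (Z t, W t) = piMap (z₁ t, w₁ t) := by rw [hZ, hW]; rfl
    rw [(hZd t ht).deriv, (hWd t ht).deriv, hπZW, ← dPiMap_system15Field t (hzne t ht), ← hsys]
    rfl
  exact ⟨fun t ht => (hZd t ht).differentiableAt, fun t ht => (hWd t ht).differentiableAt,
    fun t ht => congrArg Prod.fst (hfield t ht), fun t ht => congrArg Prod.snd (hfield t ht),
    fun p => hπ' ▸ piMap_involutive p, fun t c _ => hπ' ▸ piMap_mk_zero c⟩

/-- The transformation π : (z₁, w₁) ↦ (−z₁, 4z₁² − w₁) is a symmetry of system (15):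
it takes solutions to solutions, satisfies π ∘ π = id, and interchanges the two
accessible singular points (0, √(2t)) and (0, −√(2t)). -/
theorem symmetry_pi_of_system15
    (U : Set ℂ) (hU : IsOpen U) (z₁ w₁ : ℂ → ℂ)
    (hz : ∀ t ∈ U, DifferentiableAt ℂ z₁ t) (hw : ∀ t ∈ U, DifferentiableAt ℂ w₁ t)
    (hzne : ∀ t ∈ U, z₁ t ≠ 0)
    (hsys1 : ∀ t ∈ U, deriv z₁ t = -(z₁ t) ^ 2 + w₁ t / 2)
    (hsys2 : ∀ t ∈ U, deriv w₁ t =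
      (2 * t - (w₁ t) ^ 2) / (2 * z₁ t) + 4 * z₁ t * w₁ t)
    (Z W : ℂ → ℂ) (hZ : ∀ t, Z t = -(z₁ t)) (hW : ∀ t, W t = 4 * (z₁ t) ^ 2 - w₁ t)
    (π : ℂ × ℂ → ℂ × ℂ) (hπ : ∀ p : ℂ × ℂ, π p = (-p.1, 4 * p.1 ^ 2 - p.2)) :
    (∀ t ∈ U, DifferentiableAt ℂ Z t) ∧ (∀ t ∈ U, DifferentiableAt ℂ W t) ∧
    (∀ t ∈ U, deriv Z t = -(Z t) ^ 2 + W t / 2) ∧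
    (∀ t ∈ U, deriv W t = (2 * t - (W t) ^ 2) / (2 * Z t) + 4 * Z t * W t) ∧
    (∀ p : ℂ × ℂ, π (π p) = p) ∧
    (∀ t c : ℂ, c ^ 2 = 2 * t → π (0, c) = (0, -c)) :=
  symmetry_pi_of_system15_general U z₁ w₁ hz hw hzne hsys1 hsys2 Z W hZ hW π hπ
end

section
/- For all v, u, t ∈ ℂ with v ≠ 0, define φ(v, u, t) := (1/v, ((uv − 1/2)v − t/2)v²) and write (z₁, w₁) := φ(v, u, t). Then φ(−v, −(u − t/v² − 4/v⁶), t) = (−z₁, 4z₁² − w₁). That is, the birational symmetry s₁|_{a=−1} : (v, u) ↦ (−v, −(u − t/v² − 4/v⁶)) of system (6), pulled back by the chart map φ, equals the transformation π : (z₁, w₁) ↦ (−z₁, 4z₁² − w₁). -/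
/-- The birational symmetry s₁|_{a=−1} : (v, u) ↦ (−v, −(u − t/v² − 4/v⁶)) of system (6),
pulled back by the chart map φ(v,u,t) = (1/v, ((uv − 1/2)v − t/2)v²) of the Hirzebruch
surface Σ₄, equals the transformation π : (z₁, w₁) ↦ (−z₁, 4z₁² − w₁). -/
theorem s1_pullback_equals_pi
    (φ : ℂ → ℂ → ℂ → ℂ × ℂ)
    (hφ : ∀ v u t : ℂ, φ v u t = (1 / v, ((u * v - 1 / 2) * v - t / 2) * v ^ 2)) :
    ∀ v u t : ℂ, v ≠ 0 →
      φ (-v) (-(u - t / v ^ 2 - 4 / v ^ 6)) t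
        = (-(φ v u t).1, 4 * (φ v u t).1 ^ 2 - (φ v u t).2) := by
  intro v u t hv
  simp only [hφ]
  refine Prod.ext ?_ ?_ <;> simp only <;> field_simp <;> ring_nf <;>
    rw [inv_pow] <;> field_simp <;> ring
end

section
/- Define K(v, u, t) := −v⁶u²/4 + v⁵u/4 + (1/4)tv⁴u − tv³/8 − v⁴/16 − (1/16)t²v² + u. Then for all v, y, t ∈ ℂ with v ≠ 0: K(v, y + t/v² + 4/v⁶, t) − 1/v = −v⁶y²/4 + v⁵y/4 − (1/4)tv⁴y + tv³/8 − v⁴/16 − (1/16)t²v² − y. In particular, under the symplectic birational change of coordinates (x₃, y₃) = (v, u − t/v² − 4/v⁶), the function K − 1/v becomes a polynomial in (x₃, y₃). -/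
/-- Holomorphy condition at P₃: under (x₃, y₃) = (v, u − t/v² − 4/v⁶), the Hamiltonian
K − 1/v becomes the polynomial −x₃⁶y₃²/4 + x₃⁵y₃/4 − (1/4)tx₃⁴y₃ + tx₃³/8 − x₃⁴/16
− (1/16)t²x₃² − y₃. -/
theorem holomorphy_condition_r3
    (K : ℂ → ℂ → ℂ → ℂ)
    (hK : ∀ v u t : ℂ, K v u t =
      -(v ^ 6 * u ^ 2) / 4 + v ^ 5 * u / 4 + (1 / 4) * t * v ^ 4 * u - t * v ^ 3 / 8
        - v ^ 4 / 16 - (1 / 16) * t ^ 2 * v ^ 2 + u) :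
    ∀ v y t : ℂ, v ≠ 0 →
      K v (y + t / v ^ 2 + 4 / v ^ 6) t - 1 / v =
        -(v ^ 6 * y ^ 2) / 4 + v ^ 5 * y / 4 - (1 / 4) * t * v ^ 4 * y + t * v ^ 3 / 8
          - v ^ 4 / 16 - (1 / 16) * t ^ 2 * v ^ 2 - y := by
  intro v y t hv
  rw [hK]
  have hw : v * v⁻¹ = 1 := mul_inv_cancel₀ hv
  simp only [div_eq_mul_inv, one_div, ← inv_pow]
  linear_combination ((-2 : ℂ) * y +
      (1 : ℂ) * v⁻¹ +
      (-1 : ℂ) * v⁻¹ ^ 2 * t +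
      (-4 : ℂ) * v⁻¹ ^ 6 +
      (-2 : ℂ) * v * v⁻¹ * y +
      (1 : ℂ) * v * v⁻¹ ^ 2 +
      (-1 : ℂ) * v * v⁻¹ ^ 3 * t +
      (-4 : ℂ) * v * v⁻¹ ^ 7 +
      (-2 : ℂ) * v ^ 2 * v⁻¹ ^ 2 * y +
      (1 : ℂ) * v ^ 2 * v⁻¹ ^ 3 +
      (-1 : ℂ) * v ^ 2 * v⁻¹ ^ 4 * t +
      (-4 : ℂ) * v ^ 2 * v⁻¹ ^ 8 +
      (1/4 : ℂ) * v ^ 3 * t +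
      (-2 : ℂ) * v ^ 3 * v⁻¹ ^ 3 * y +
      (1 : ℂ) * v ^ 3 * v⁻¹ ^ 4 +
      (-1 : ℂ) * v ^ 3 * v⁻¹ ^ 5 * t +
      (-4 : ℂ) * v ^ 3 * v⁻¹ ^ 9 +
      (-1/2 : ℂ) * v ^ 4 * y * t +
      (1/4 : ℂ) * v ^ 4 * v⁻¹ * t +
      (-1/4 : ℂ) * v ^ 4 * v⁻¹ ^ 2 * t ^ 2 +
      (-2 : ℂ) * v ^ 4 * v⁻¹ ^ 4 * y +
      (1 : ℂ) * v ^ 4 * v⁻¹ ^ 5 +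
      (-2 : ℂ) * v ^ 4 * v⁻¹ ^ 6 * t +
      (-4 : ℂ) * v ^ 4 * v⁻¹ ^ 10 +
      (-1/2 : ℂ) * v ^ 5 * v⁻¹ * y * t +
      (-1/4 : ℂ) * v ^ 5 * v⁻¹ ^ 3 * t ^ 2 +
      (-2 : ℂ) * v ^ 5 * v⁻¹ ^ 5 * y +
      (-2 : ℂ) * v ^ 5 * v⁻¹ ^ 7 * t +
      (-4 : ℂ) * v ^ 5 * v⁻¹ ^ 11) * hw
end

section
/- Define H_I(x, y, t) := y²/2 − 2x³ − tx. Then for all X, Y, t ∈ ℂ with X ≠ 0: H_I(1/X², (4 + tX⁴ − X⁵ + 2X⁶Y)/(2X³), t) + 1/X = 2Y + (1/8)t²X² − (1/4)tX³ + (1/8)X⁴ + (1/2)tX⁴Y − (1/2)X⁵Y + (1/2)X⁶Y². In particular, under Painlevé's algebraic degree-2 transformation R : (x, y) = (1/X², (4 + tX⁴ − X⁵ + 2X⁶Y)/(2X³)), the function H_I + 1/X becomes a polynomial in (X, Y). -/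
/-!
Write the transformed momentum as `y = 2/X³ + u` with `u = (tX − X² + 2X³Y)/2`. Then the
pole `2/X⁶` of `y²/2` cancels `2x³ = 2/X⁶`, and the cross term `2u/X³ = t/X² − 1/X + 2Y`
cancels `tx = t/X²` and `1/X`, so that `H_I + 1/X = 2Y + u²/2`, a polynomial in `X`, `Y`.
-/

section PainleveI

variable {K : Type*} [Field K] [NeZero (2 : K)]

def painleveIHamiltonian (x y t : K) : K := y ^ 2 / 2 - 2 * x ^ 3 - t * x

lemma painleveIHamiltonian_inv_sq_two_div_cube_add {X : K} (hX : X ≠ 0) (u t : K) :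
    painleveIHamiltonian (1 / X ^ 2) (2 / X ^ 3 + u) t =
      2 * u / X ^ 3 - t / X ^ 2 + u ^ 2 / 2 := by
  unfold painleveIHamiltonian
  field_simp
  ring

lemma holoP_momentum_eq {X : K} (hX : X ≠ 0) (Y t : K) :
    (4 + t * X ^ 4 - X ^ 5 + 2 * X ^ 6 * Y) / (2 * X ^ 3) =
      2 / X ^ 3 + (t * X - X ^ 2 + 2 * X ^ 3 * Y) / 2 := by
  field_simp
  ring

theorem painleveIHamiltonian_holoP {X : K} (hX : X ≠ 0) (Y t : K) :
    painleveIHamiltonian (1 / X ^ 2) ((4 + t * X ^ 4 - X ^ 5 + 2 * X ^ 6 * Y) / (2 * X ^ 3)) t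
        + 1 / X = 2 * Y + ((t * X - X ^ 2 + 2 * X ^ 3 * Y) / 2) ^ 2 / 2 := by
  rw [holoP_momentum_eq hX, painleveIHamiltonian_inv_sq_two_div_cube_add hX]
  field_simp
  ring

end PainleveI

/-- Painlevé's holomorphy condition (holoP): under the degree-2 algebraic transformation
R : (x, y) = (1/X², (4 + tX⁴ − X⁵ + 2X⁶Y)/(2X³)), the function H_I + 1/X becomes a
polynomial in (X, Y). -/
theorem painleve_holomorphy_condition
    (H : ℂ → ℂ → ℂ → ℂ)
    (hH : ∀ x y t : ℂ, H x y t = y ^ 2 / 2 - 2 * x ^ 3 - t * x) :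
    ∀ X Y t : ℂ, X ≠ 0 →
      H (1 / X ^ 2) ((4 + t * X ^ 4 - X ^ 5 + 2 * X ^ 6 * Y) / (2 * X ^ 3)) t + 1 / X =
        2 * Y + (1 / 8) * t ^ 2 * X ^ 2 - (1 / 4) * t * X ^ 3 + (1 / 8) * X ^ 4
          + (1 / 2) * t * X ^ 4 * Y - (1 / 2) * X ^ 5 * Y + (1 / 2) * X ^ 6 * Y ^ 2 := by
  intro X Y t hX
  obtain rfl : H = painleveIHamiltonian := funext fun x => funext fun y => funext (hH x y)
  rw [painleveIHamiltonian_holoP hX]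
  ring
end

section
/- Let U ⊆ ℂ be open and let v, u : U → ℂ be differentiable functions with v(t) ≠ 0 for all t ∈ U, satisfying system (6) on U. Define z₁(t) := 1/v(t) and w₁(t) := ((u(t)v(t) − 1/2)v(t) − t/2)·v(t)². Then z₁ and w₁ are differentiable on U and satisfy system (15): dz₁/dt = −z₁² + w₁/2, dw₁/dt = (2t − w₁²)/(2z₁) + 4z₁w₁ on U. -/
/-- In the chart (z₁, w₁) = (1/v, ((uv − 1/2)v − t/2)v²) of the Hirzebruch surface Σ₄,
solutions of system (6) satisfy system (15): dz₁/dt = −z₁² + w₁/2,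
dw₁/dt = (2t − w₁²)/(2z₁) + 4z₁w₁. -/
theorem system6_in_chart_z1w1
    (U : Set ℂ) (hU : IsOpen U) (v u : ℂ → ℂ)
    (hv : ∀ t ∈ U, DifferentiableAt ℂ v t) (hu : ∀ t ∈ U, DifferentiableAt ℂ u t)
    (hvne : ∀ t ∈ U, v t ≠ 0)
    (hsys1 : ∀ t ∈ U, deriv v t =
      1 + (t / 4) * (v t) ^ 4 + (1 / 4) * (v t) ^ 5 - (1 / 2) * (v t) ^ 6 * u t)
    (hsys2 : ∀ t ∈ U, deriv u t =
      (1 / 8) * t ^ 2 * v t + (3 / 8) * t * (v t) ^ 2 - (t * u t - 1 / 4) * (v t) ^ 3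
        - (5 / 4) * (v t) ^ 4 * u t + (3 / 2) * (v t) ^ 5 * (u t) ^ 2)
    (z₁ w₁ : ℂ → ℂ)
    (hz : ∀ t, z₁ t = 1 / v t)
    (hw : ∀ t, w₁ t = ((u t * v t - 1 / 2) * v t - t / 2) * (v t) ^ 2) :
    (∀ t ∈ U, DifferentiableAt ℂ z₁ t) ∧ (∀ t ∈ U, DifferentiableAt ℂ w₁ t) ∧
    (∀ t ∈ U, deriv z₁ t = -(z₁ t) ^ 2 + w₁ t / 2) ∧
    (∀ t ∈ U, deriv w₁ t = (2 * t - (w₁ t) ^ 2) / (2 * z₁ t) + 4 * z₁ t * w₁ t) := by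
  have hzfun : z₁ = fun t => (v t)⁻¹ := funext fun t => by rw [hz]; simp [one_div]
  have hwfun : w₁ = fun t => u t * v t ^ 4 - v t ^ 3 / 2 - t / 2 * v t ^ 2 :=
    funext fun t => by rw [hw]; ring
  refine ⟨?_, ?_, ?_, ?_⟩
  · intro t ht
    rw [hzfun]
    exact (hv t ht).inv (hvne t ht)
  · intro t ht
    rw [hwfun]
    exact (((hu t ht).mul ((hv t ht).pow 4)).sub (((hv t ht).pow 3).div_const 2)).sub
      ((differentiableAt_id.div_const 2).mul ((hv t ht).pow 2))
  · intro t ht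
    have H : HasDerivAt z₁ (-(deriv v t) / v t ^ 2) t := by
      rw [hzfun]
      exact ((hv t ht).hasDerivAt.inv (hvne t ht))
    rw [H.deriv, hsys1 t ht, hz, hw]
    have hne := hvne t ht
    field_simp
    ring
  · intro t ht
    have Hv := (hv t ht).hasDerivAt
    have Hu := (hu t ht).hasDerivAt
    have H : HasDerivAt w₁
        (deriv u t * v t ^ 4 + u t * ((4 : ℕ) * v t ^ 3 * deriv v t)
          - (3 : ℕ) * v t ^ 2 * deriv v t / 2
          - (1 / 2 * v t ^ 2 + t / 2 * ((2 : ℕ) * v t ^ 1 * deriv v t))) t := by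
      rw [hwfun]
      exact ((Hu.mul (Hv.pow 4)).sub ((Hv.pow 3).div_const 2)).sub
        (((hasDerivAt_id t).div_const 2).mul (Hv.pow 2))
    rw [H.deriv, hsys1 t ht, hsys2 t ht, hz, hw]
    have hne := hvne t ht
    field_simp
    ring
end

section
/- Let C₁, C₂ ∈ ℂ. Define on the open set Ω := {T ∈ ℂ : T ≠ C₁} the functions X(T) := −(T − C₁) and Y(T) := C₂(T − C₁)⁶. Then X(T) ≠ 0 on Ω and (X, Y) solves the reduced system at P₃: dX/dT = −1, dY/dT = −6Y/X on Ω. In particular the reduced system at P₃ is solved by single-valued (polynomial) functions of T, so system (6) passes the Painlevé α-test at the accessible singular point P₃. -/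
theorem deriv_const_mul_sub_pow {𝕜 : Type*} [NontriviallyNormedField 𝕜] (a c : 𝕜) (n : ℕ)
    {T : 𝕜} (hT : T ≠ a) :
    deriv (fun T => c * (T - a) ^ n) T = n * (c * (T - a) ^ n) / (T - a) := by
  have hderiv : HasDerivAt (fun T => c * (T - a) ^ n) (c * (n * (T - a) ^ (n - 1))) T := by
    simpa using (((hasDerivAt_id T).sub_const a).pow n).const_mul c
  rw [hderiv.deriv, eq_div_iff (sub_ne_zero.mpr hT)]
  rcases n with _ | n
  · simp
  · rw [Nat.add_sub_cancel, pow_succ]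
    ring

/-- The reduced system (28) at the accessible singular point P₃, dX/dT = −1,
dY/dT = −6Y/X, is solved by the single-valued (polynomial) functions
X(T) = −(T − C₁), Y(T) = C₂(T − C₁)⁶: system (6) passes the Painlevé α-test at P₃. -/
theorem alpha_test_at_P3
    (C₁ C₂ : ℂ) (X Y : ℂ → ℂ)
    (hX : ∀ T, X T = -(T - C₁)) (hY : ∀ T, Y T = C₂ * (T - C₁) ^ 6) :
    ∀ T ∈ {T : ℂ | T ≠ C₁},
      X T ≠ 0 ∧ deriv X T = -1 ∧ deriv Y T = -6 * Y T / X T := by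
  intro T (hT : T ≠ C₁)
  have hX_eq : X = fun T => -(T - C₁) := funext hX
  have hY_eq : Y = fun T => C₂ * (T - C₁) ^ 6 := funext hY
  refine ⟨by rw [hX, neg_ne_zero, sub_ne_zero]; exact hT, ?_, ?_⟩
  · rw [hX_eq]
    exact ((hasDerivAt_id T).sub_const C₁).neg.deriv
  · have hY_deriv : deriv Y T = 6 * Y T / (T - C₁) := by
      rw [hY, hY_eq]
      exact_mod_cast deriv_const_mul_sub_pow C₁ C₂ 6 hT
    rw [hY_deriv, hX, div_neg, neg_mul, neg_div, neg_neg]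
end
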